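/- Let Γ be a group with lower central series (Γ_i), and for each s define Γ'_s = { g ∈ Γ : gⁿ ∈ Γ_s for some integer n ≥ 1 }. If Γ is finitely generated and nilpotent, then Γ'_s is a subgroup of Γ containing Γ_s, and Γ / Γ'_s is torsion-free. -/

import Mathlib

/-!
The isolator of `Γ_s` is the preimage of the set of elements of finite order of the nilpotent
group `Γ / Γ_s`, so everything reduces to the fact that in a nilpotent group the elements of finite
order form a subgroup. Two such elements generate a finitely generated nilpotent group that is
generated by elements of finite order, and such a group `G` is finite, by induction on the
nilpotency class: `G / Z(G)` is finite by induction; commutators only depend on cosets of the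
centre, so there are finitely many of them and by Schur's theorem `[G, G]` is finite; finally
`G / [G, G]` is a finitely generated abelian group generated by torsion elements, hence finite.
-/

open Subgroup
open scoped commutatorElement

theorem commutatorElement_mul_left_of_mem_center {G : Type*} [Group G] (a b : G) {z : G}
    (hz : z ∈ center G) : ⁅a * z, b⁆ = ⁅a, b⁆ := by
  rw [commutatorElement_def, mul_inv_rev, mul_assoc a z b, ← mem_center_iff.mp hz b]
  group

theorem commutatorElement_mul_mul_of_mem_center {G : Type*} [Group G] (a b : G) {z w : G}
    (hz : z ∈ center G) (hw : w ∈ center G) : ⁅a * z, b * w⁆ = ⁅a, b⁆ := by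
  rw [commutatorElement_mul_left_of_mem_center a _ hz, ← commutatorElement_inv,
    commutatorElement_mul_left_of_mem_center b a hw, commutatorElement_inv]

theorem finite_commutatorSet_of_finite_quotient_center (G : Type*) [Group G]
    [Finite (G ⧸ center G)] : Finite (commutatorSet G) := by
  have hsub : commutatorSet G ⊆
      Set.range fun p : (G ⧸ center G) × (G ⧸ center G) => ⁅p.1.out, p.2.out⁆ := by
    rintro _ ⟨a, b, rfl⟩
    obtain ⟨z, hz⟩ := QuotientGroup.mk_out_eq_mul (center G) a
    obtain ⟨w, hw⟩ := QuotientGroup.mk_out_eq_mul (center G) b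
    exact ⟨(a, b), by simpa only [hz, hw] using commutatorElement_mul_mul_of_mem_center a b z.2 w.2⟩
  exact ((Set.finite_range _).subset hsub).to_subtype

theorem closure_setOf_isOfFinOrder_eq_top_of_surjective {G H : Type*} [Group G] [Group H]
    {f : G →* H} (hf : Function.Surjective f) (hG : closure {g : G | IsOfFinOrder g} = ⊤) :
    closure {h : H | IsOfFinOrder h} = ⊤ := by
  rw [eq_top_iff, ← f.range_eq_top_of_surjective hf, MonoidHom.range_eq_map, ← hG,
    MonoidHom.map_closure]
  exact closure_mono (Set.image_subset_iff.mpr fun _ => f.isOfFinOrder)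

theorem CommGroup.isMulTorsion_of_closure_setOf_isOfFinOrder_eq_top {G : Type*} [CommGroup G]
    (hG : closure {g : G | IsOfFinOrder g} = ⊤) : IsMulTorsion G := by
  rw [← CommGroup.torsion_eq_top_iff, eq_top_iff, ← hG, closure_le]
  exact fun _ => id

theorem Group.IsNilpotent.finite_of_closure_setOf_isOfFinOrder_eq_top (G : Type*) [Group G]
    [Group.IsNilpotent G] [Group.FG G] (hG : closure {g : G | IsOfFinOrder g} = ⊤) : Finite G := by
  revert hG
  refine Group.nilpotent_center_quotient_ind (P := fun G _ _ =>
    ∀ [Group.FG G], closure {g : G | IsOfFinOrder g} = ⊤ → Finite G) G ?_ ?_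
  · intro G _ _ _ _
    exact Finite.of_subsingleton
  · intro G _ _ ih _ hG
    have : Finite (G ⧸ center G) :=
      ih (closure_setOf_isOfFinOrder_eq_top_of_surjective (QuotientGroup.mk'_surjective _) hG)
    -- Schur: `Finite (commutatorSet G)` gives `Finite (commutator G)` by instance.
    have := finite_commutatorSet_of_finite_quotient_center G
    have : Group.FG (Abelianization G) := QuotientGroup.fg _
    have : Finite (Abelianization G) := CommGroup.finite_of_fg_isMulTorsion _
      (CommGroup.isMulTorsion_of_closure_setOf_isOfFinOrder_eq_top
        (closure_setOf_isOfFinOrder_eq_top_of_surjective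
          (QuotientGroup.mk'_surjective (commutator G)) hG))
    have : Finite (G ⧸ commutator G) := ‹Finite (Abelianization G)›
    exact Finite.of_subgroup_quotient (commutator G)

theorem IsOfFinOrder.mul_of_isNilpotent {G : Type*} [Group G] [Group.IsNilpotent G] {a b : G}
    (ha : IsOfFinOrder a) (hb : IsOfFinOrder b) : IsOfFinOrder (a * b) := by
  set H := closure ({a, b} : Set G)
  have hgen : closure {h : H | IsOfFinOrder h} = ⊤ := by
    refine eq_top_iff.mpr (closure_closure_coe_preimage.symm.le.trans (closure_mono ?_))
    rintro h (hh | hh)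
    · exact Submonoid.isOfFinOrder_coe.mp (by rwa [hh])
    · exact Submonoid.isOfFinOrder_coe.mp (by rwa [Set.mem_singleton_iff.mp hh])
  have := Group.IsNilpotent.finite_of_closure_setOf_isOfFinOrder_eq_top H hgen
  exact Submonoid.isOfFinOrder_coe.mpr (isOfFinOrder_of_finite
    (⟨a * b, mul_mem (subset_closure (by simp)) (subset_closure (by simp))⟩ : H))

def Group.IsNilpotent.torsion (G : Type*) [Group G] [Group.IsNilpotent G] : Subgroup G where
  carrier := {g | IsOfFinOrder g}
  one_mem' := IsOfFinOrder.one
  mul_mem' := IsOfFinOrder.mul_of_isNilpotent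
  inv_mem' := IsOfFinOrder.inv

instance (G : Type*) [Group G] [Group.IsNilpotent G] : (Group.IsNilpotent.torsion G).Normal where
  conj_mem _ hx g := (MulAut.conj g).toMonoidHom.isOfFinOrder hx

theorem QuotientGroup.isOfFinOrder_mk_iff {G : Type*} [Group G] {N : Subgroup G} [N.Normal]
    {g : G} : IsOfFinOrder (g : G ⧸ N) ↔ ∃ n, 0 < n ∧ g ^ n ∈ N := by
  simp only [isOfFinOrder_iff_pow_eq_one, ← QuotientGroup.mk_pow, QuotientGroup.eq_one_iff]

theorem isolator_subgroup_torsionFree_quotient_general (Γ : Type*) [Group Γ]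
    [Group.IsNilpotent Γ] (k : ℕ) :
    ∃ H : Subgroup Γ,
      (H : Set Γ) = {g : Γ | ∃ n : ℕ, 0 < n ∧ g ^ n ∈ (⊤ : Subgroup Γ).lowerCentralSeries k} ∧
      H.Normal ∧ (⊤ : Subgroup Γ).lowerCentralSeries k ≤ H ∧
      ∀ g : Γ, (∃ n : ℕ, 0 < n ∧ g ^ n ∈ H) → g ∈ H := by
  set N := (⊤ : Subgroup Γ).lowerCentralSeries k
  refine ⟨(Group.IsNilpotent.torsion (Γ ⧸ N)).comap (QuotientGroup.mk' N), ?_, inferInstance,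
    fun g hg => ?_, fun g ⟨n, hn, hg⟩ => ?_⟩
  · ext g
    exact QuotientGroup.isOfFinOrder_mk_iff
  · exact QuotientGroup.isOfFinOrder_mk_iff.mpr ⟨1, one_pos, by rwa [pow_one]⟩
  · rw [mem_comap, map_pow] at hg
    exact hg.of_pow hn.ne'

/-- For a finitely generated nilpotent group `Γ`, the isolator
`Γ'_s = {g : ∃ n ≥ 1, gⁿ ∈ Γ_s}` of a term `Γ_s` of the lower central series
is a (normal) subgroup containing `Γ_s`, and the quotient `Γ / Γ'_s` is
torsion-free.  (Mathlib indexing: `Γ_s = lowerCentralSeries Γ (s-1)`; here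
`k = s - 1`.) -/
theorem isolator_subgroup_torsionFree_quotient (Γ : Type*) [Group Γ]
    [Group.FG Γ] [Group.IsNilpotent Γ] (k : ℕ) :
    ∃ H : Subgroup Γ,
      (H : Set Γ) = {g : Γ | ∃ n : ℕ, 0 < n ∧ g ^ n ∈ (⊤ : Subgroup Γ).lowerCentralSeries k} ∧
      H.Normal ∧ (⊤ : Subgroup Γ).lowerCentralSeries k ≤ H ∧
      ∀ g : Γ, (∃ n : ℕ, 0 < n ∧ g ^ n ∈ H) → g ∈ H :=
  isolator_subgroup_torsionFree_quotient_general Γ k
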